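/- For every reduced word w = w1…w(2n) over A = {a,b,c} of even length 2n ≥ 2 and every letter p ∈ A with p ≠ w1, the word ς_R^p(w) has even length, each of its consecutive disjoint pairs consists of two distinct letters, and υ(ς_R^p(w)) = σ_R(υ(w)). That is, the factorization of the substitution ς_R is the Tribonacci substitution σ_R. -/

import Mathlib

/-- The alphabet `A = {a, b, c}`. -/
inductive ABC : Type
  | a : ABC
  | b : ABC
  | c : ABC
deriving DecidableEq

/-- A word is reduced if no two consecutive letters are equal. -/
def ReducedWord (w : List ABC) : Prop := List.Chain' (· ≠ ·) w

/-- The consecutive disjoint pairs of a word each consist of two distinct letters. -/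
def PairsDistinct : List ABC → Prop
  | x :: y :: rest => x ≠ y ∧ PairsDistinct rest
  | _ => True

/-- The code of a pair of distinct letters: `3` for `ab`/`ba`, `2` for `ac`/`ca`,
`1` for `bc`/`cb` (junk value `0` otherwise). -/
def pairCode : ABC → ABC → ℕ
  | .a, .b => 3
  | .b, .a => 3
  | .a, .c => 2
  | .c, .a => 2
  | .b, .c => 1
  | .c, .b => 1
  | _, _ => 0

/-- The factorization map `υ`: replace each consecutive disjoint pair of letters by its
code in `N = {1,2,3}`. -/
def fac : List ABC → List ℕ
  | x :: y :: rest => pairCode x y :: fac rest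
  | _ => []

/-- The Tribonacci substitution `σ_R : 1 ↦ 12, 2 ↦ 13, 3 ↦ 1` on letters. -/
def tribLetter : ℕ → List ℕ
  | 1 => [1, 2]
  | 2 => [1, 3]
  | 3 => [1]
  | _ => []

/-- The Tribonacci substitution `σ_R` on words over `N`. -/
def tribSub (u : List ℕ) : List ℕ := u.flatMap tribLetter

/-- `ς(p,x)` for letters `p ≠ x`: `ς(p,a) = b`, `ς(p,b) = c`, `ς(a,c) = cba`,
`ς(b,c) = bca` (junk value on the undefined case `p = x = c`). -/
def sigLetter : ABC → ABC → List ABC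
  | _, .a => [.b]
  | _, .b => [.c]
  | .a, .c => [.c, .b, .a]
  | .b, .c => [.b, .c, .a]
  | .c, .c => []

/-- `ς_R^p(w) = ς(p,w1) ς(w1,w2) ⋯ ς(w(n-1),wn)`. -/
def sigWord (p : ABC) : List ABC → List ABC
  | [] => []
  | x :: rest => sigLetter p x ++ sigWord x rest

lemma facAppend : ∀ u v : List ABC, u.length % 2 = 0 → fac (u ++ v) = fac u ++ fac v
  | [], v, _ => rfl
  | [x], v, h => by simp at h
  | x :: y :: u, v, h => by
    simp only [List.cons_append, fac, List.length_cons] at *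
    rw [facAppend u v (by omega)]

lemma pairsAppend : ∀ u v : List ABC, u.length % 2 = 0 → PairsDistinct u →
    PairsDistinct v → PairsDistinct (u ++ v)
  | [], v, _, _, hv => hv
  | [x], v, h, _, _ => by simp at h
  | x :: y :: u, v, h, hu, hv => by
    simp only [List.cons_append, PairsDistinct, List.length_cons] at *
    exact ⟨hu.1, pairsAppend u v (by omega) hu.2 hv⟩

lemma blockLemma (p x y : ABC) (hpx : p ≠ x) (hxy : x ≠ y) :
    (sigLetter p x ++ sigLetter x y).length % 2 = 0 ∧
    PairsDistinct (sigLetter p x ++ sigLetter x y) ∧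
    fac (sigLetter p x ++ sigLetter x y) = tribLetter (pairCode x y) := by
  rcases p <;> rcases x <;> rcases y <;>
    simp_all [sigLetter, fac, pairCode, PairsDistinct, tribLetter] <;> decide

lemma mainLemma : ∀ w : List ABC, w.length % 2 = 0 → ReducedWord w →
    ∀ p : ABC, w.head? ≠ some p →
    (sigWord p w).length % 2 = 0 ∧
    PairsDistinct (sigWord p w) ∧
    fac (sigWord p w) = tribSub (fac w)
  | [], _, _, p, _ => by simp [sigWord, fac, tribSub, PairsDistinct]
  | [x], h, _, p, _ => by simp at h
  | x :: y :: rest, h, hred, p, hp => by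
    have hxy : x ≠ y := List.isChain_cons_cons.mp hred |>.1
    have hred' : ReducedWord (y :: rest) := List.isChain_cons_cons.mp hred |>.2
    have hyr : rest.head? ≠ some y := by
      cases rest with
      | nil => simp
      | cons z t =>
        have := (List.isChain_cons_cons.mp hred').1
        simp only [List.head?_cons, ne_eq, Option.some.injEq]
        exact fun e => this e.symm
    have hredr : ReducedWord rest := hred'.tail
    have hpx : p ≠ x := by
      simp only [List.head?_cons, ne_eq, Option.some.injEq] at hp
      exact fun e => hp e.symm
    have ih := mainLemma rest (by simp only [List.length_cons] at h; omega) hredr y hyr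
    obtain ⟨hb1, hb2, hb3⟩ := blockLemma p x y hpx hxy
    have heq : sigWord p (x :: y :: rest) =
        (sigLetter p x ++ sigLetter x y) ++ sigWord y rest := by
      simp [sigWord, List.append_assoc]
    rw [heq]
    refine ⟨?_, pairsAppend _ _ hb1 hb2 ih.2.1, ?_⟩
    · have := ih.1
      simp only [List.length_append] at hb1 ⊢
      omega
    · rw [facAppend _ _ hb1, hb3, ih.2.2]
      simp [fac, tribSub]

/-- The factorization of the substitution `ς_R` is the Tribonacci substitution `σ_R`:
for every reduced word `w` of even length `2n ≥ 2` and every letter `p ≠ w1`, the word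
`ς_R^p(w)` has even length, its consecutive disjoint pairs consist of distinct letters,
and `υ(ς_R^p(w)) = σ_R(υ(w))`. -/
theorem statement15 (w : List ABC) (n : ℕ) (hn : 1 ≤ n) (hlen : w.length = 2 * n)
    (hred : ReducedWord w) (p : ABC) (hp : w.head? ≠ some p) :
    (sigWord p w).length % 2 = 0 ∧
    PairsDistinct (sigWord p w) ∧
    fac (sigWord p w) = tribSub (fac w) := by
  exact mainLemma w (by omega) hred p hp
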